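/- arXiv:1502.07484 — 6 statements merged into one kernel-verified Lean document; each statement's English description precedes it below -/
import Mathlib

section
/- Let H be a connected bipartite graph with parts X and Y. Then H is P5-free (contains no induced path on 5 vertices) if and only if H is 2K2-free (contains no induced subgraph consisting of two disjoint edges with no edges between them). -/
open SimpleGraph

/-- `G` contains an induced copy of `H`. -/
def ContainsInduced {V W : Type*} (G : SimpleGraph V) (H : SimpleGraph W) : Prop :=
  ∃ f : W ↪ V, ∀ u v, G.Adj (f u) (f v) ↔ H.Adj u v

/-- The path on 5 vertices. -/
def path5 : SimpleGraph (Fin 5) :=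
  SimpleGraph.fromRel (fun i j => (i : ℕ) + 1 = (j : ℕ))

/-- Two disjoint edges. -/
def twoK2 : SimpleGraph (Fin 4) :=
  SimpleGraph.fromRel (fun i j => (i = 0 ∧ j = 1) ∨ (i = 2 ∧ j = 3))

/-- The cycle on `n` vertices (for `n ≥ 3`). -/
def cycG (n : ℕ) : SimpleGraph (Fin n) :=
  SimpleGraph.fromRel (fun i j => ((i : ℕ) + 1) % n = (j : ℕ))

/-- `G` contains an induced wheel: an induced (chordless) cycle of length at least 4
plus a vertex with at least three neighbors on the cycle. -/
def ContainsWheel {V : Type*} (G : SimpleGraph V) : Prop :=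
  ∃ n : ℕ, 4 ≤ n ∧ ∃ (f : Fin n ↪ V) (hub : V),
    (∀ i, hub ≠ f i) ∧
    (∀ i j, G.Adj (f i) (f j) ↔ (cycG n).Adj i j) ∧
    3 ≤ {i : Fin n | G.Adj hub (f i)}.ncard

/-- `G` contains an induced wheel on at most `k` vertices. -/
def ContainsWheelLE {V : Type*} (G : SimpleGraph V) (k : ℕ) : Prop :=
  ∃ n : ℕ, 4 ≤ n ∧ n + 1 ≤ k ∧ ∃ (f : Fin n ↪ V) (hub : V),
    (∀ i, hub ≠ f i) ∧
    (∀ i j, G.Adj (f i) (f j) ↔ (cycG n).Adj i j) ∧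
    3 ≤ {i : Fin n | G.Adj hub (f i)}.ncard

/-- `s` is the vertex set of a hole (induced cycle of length at least 4) of `G`. -/
def IsHoleSet {V : Type*} (G : SimpleGraph V) (s : Set V) : Prop :=
  ∃ n : ℕ, 4 ≤ n ∧ ∃ f : Fin n ↪ V, Set.range f = s ∧
    ∀ i j, G.Adj (f i) (f j) ↔ (cycG n).Adj i j

/-- `G` is a split graph: its vertex set partitions into a stable set and a clique. -/
def IsSplit {V : Type*} (G : SimpleGraph V) : Prop :=
  ∃ S K : Set V, (∀ v, v ∈ S ∨ v ∈ K) ∧ S ∩ K = ∅ ∧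
    (∀ u ∈ S, ∀ v ∈ S, ¬G.Adj u v) ∧ G.IsClique K

instance : DecidableRel path5.Adj := fun i j =>
  decidable_of_iff' _ (SimpleGraph.fromRel_adj _ i j)

instance : DecidableRel twoK2.Adj := fun i j =>
  decidable_of_iff' _ (SimpleGraph.fromRel_adj _ i j)

section Aux
variable {V : Type*} (H : SimpleGraph V) (X Y : Set V)

/-- In a bipartite graph, two vertices with a common neighbor are non-adjacent. -/
lemma bip_common {H : SimpleGraph V} {X Y : Set V}
    (hpart : ∀ v, v ∈ X ∨ v ∈ Y)
    (hXstable : ∀ u ∈ X, ∀ v ∈ X, ¬H.Adj u v)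
    (hYstable : ∀ u ∈ Y, ∀ v ∈ Y, ¬H.Adj u v)
    {x y z : V} (hx : H.Adj x z) (hy : H.Adj y z) : ¬H.Adj x y := by
  rcases hpart z with hz | hz
  · have hx' : x ∈ Y := by
      rcases hpart x with h | h
      · exact absurd hx (hXstable x h z hz)
      · exact h
    have hy' : y ∈ Y := by
      rcases hpart y with h | h
      · exact absurd hy (hXstable y h z hz)
      · exact h
    exact hYstable x hx' y hy'
  · have hx' : x ∈ X := by
      rcases hpart x with h | h
      · exact h
      · exact absurd hx (hYstable x h z hz)
    have hy' : y ∈ X := by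
      rcases hpart y with h | h
      · exact h
      · exact absurd hy (hYstable y h z hz)
    exact hXstable x hx' y hy'

lemma key {H : SimpleGraph V} {X Y : Set V}
    (hpart : ∀ v, v ∈ X ∨ v ∈ Y)
    (hXstable : ∀ u ∈ X, ∀ v ∈ X, ¬H.Adj u v)
    (hYstable : ∀ u ∈ Y, ∀ v ∈ Y, ¬H.Adj u v)
    (hconn : H.Connected) :
    ∀ (a b c d : V), H.Adj a b → H.Adj c d → ¬H.Adj a c → ¬H.Adj a d →
      ¬H.Adj b c → ¬H.Adj b d → b ≠ c → b ≠ d →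
      H.dist a c ≤ H.dist a d → H.dist a c ≤ H.dist b c → H.dist a c ≤ H.dist b d →
      ContainsInduced H path5 := by
  suffices h : ∀ n : ℕ, ∀ (a b c d : V), H.Adj a b → H.Adj c d → ¬H.Adj a c → ¬H.Adj a d →
      ¬H.Adj b c → ¬H.Adj b d → b ≠ c → b ≠ d → H.dist a c = n →
      H.dist a c ≤ H.dist a d → H.dist a c ≤ H.dist b c → H.dist a c ≤ H.dist b d →
      ContainsInduced H path5 by
    intro a b c d h1 h2 h3 h4 h5 h6 h7 h8 h9 h10 h11
    exact h _ a b c d h1 h2 h3 h4 h5 h6 h7 h8 rfl h9 h10 h11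
  intro n
  induction n using Nat.strong_induction_on with
  | _ n ih =>
    intro a b c d hab hcd hac had hbc hbd hbcne hbdne hdist h2 h3 h4
    have hacne : a ≠ c := by rintro rfl; exact hbc (hab.symm)
    have hadne : a ≠ d := by rintro rfl; exact hac (hcd.symm)
    have hn2 : 2 ≤ n := by
      have h0 : n ≠ 0 := by
        rintro rfl
        exact hacne (hconn.dist_eq_zero_iff.mp hdist)
      have h1 : n ≠ 1 := by
        rintro rfl
        exact hac (dist_eq_one_iff_adj.mp hdist)
      omega
    obtain ⟨p, hp⟩ := hconn.exists_walk_length_eq_dist a c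
    rw [hdist] at hp
    cases p with
    | nil => simp at hp; omega
    | @cons _ v1 _ h q =>
      simp only [Walk.length_cons] at hp
      -- dist v1 c = n - 1
      have hd1 : H.dist v1 c ≤ n - 1 := by
        have := dist_le q
        omega
      have hd2 : n - 1 ≤ H.dist v1 c := by
        have ht := hconn.dist_triangle (u := a) (v := v1) (w := c)
        have hav1 : H.dist a v1 ≤ 1 := by
          have := dist_le h.toWalk
          simpa using this
        omega
      have hdv1c : H.dist v1 c = n - 1 := le_antisymm hd1 hd2
      by_cases hcase : n = 2
      · -- base case: v1 is a common neighbor of a and c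
        have hmc : H.Adj v1 c := by
          rw [← dist_eq_one_iff_adj, hdv1c, hcase]
        set m := v1 with hm
        have hma : H.Adj a m := h
        have hmb : ¬H.Adj m b := bip_common hpart hXstable hYstable hma.symm hab.symm
        have hmd : ¬H.Adj m d := bip_common hpart hXstable hYstable hmc hcd.symm
        have hmbne : m ≠ b := by rintro rfl; exact hbc hmc
        have hmdne : m ≠ d := by rintro rfl; exact had hma
        have hmane : a ≠ m := hma.ne
        have hmcne : m ≠ c := hmc.ne
        have hcdne : c ≠ d := hcd.ne
        have habne : a ≠ b := hab.ne
        refine ⟨⟨![b, a, m, c, d], ?_⟩, ?_⟩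
        · intro i j hij
          fin_cases i <;> fin_cases j <;>
            simp only [Matrix.cons_val_zero, Matrix.cons_val_one, Matrix.head_cons,
              Matrix.cons_val_two, Matrix.tail_cons, Matrix.cons_val_three,
              Matrix.cons_val_four, Matrix.head_fin_const] at hij <;>
            first
              | rfl
              | (exfalso; first
                  | exact habne hij.symm | exact habne hij
                  | exact hmbne hij.symm | exact hmbne hij
                  | exact hbcne hij.symm | exact hbcne hij
                  | exact hbdne hij.symm | exact hbdne hij
                  | exact hmane hij.symm | exact hmane hij
                  | exact hacne hij.symm | exact hacne hij
                  | exact hadne hij.symm | exact hadne hij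
                  | exact hmcne hij.symm | exact hmcne hij
                  | exact hmdne hij.symm | exact hmdne hij
                  | exact hcdne hij.symm | exact hcdne hij)
        · intro u v
          have hba : H.Adj b a := hab.symm
          have hcm : H.Adj c m := hmc.symm
          have ham : H.Adj m a := hma.symm
          have hdc : H.Adj d c := hcd.symm
          have hca : ¬H.Adj c a := fun h' => hac h'.symm
          have hda : ¬H.Adj d a := fun h' => had h'.symm
          have hcb : ¬H.Adj c b := fun h' => hbc h'.symm
          have hdb : ¬H.Adj d b := fun h' => hbd h'.symm
          have hbm : ¬H.Adj b m := fun h' => hmb h'.symm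
          have hdm : ¬H.Adj d m := fun h' => hmd h'.symm
          fin_cases u <;> fin_cases v <;>
            simp only [Function.Embedding.coeFn_mk, Fin.isValue, Matrix.cons_val_zero, Matrix.cons_val_one, Matrix.head_cons,
              Matrix.cons_val_two, Matrix.tail_cons, Matrix.cons_val_three,
              Matrix.cons_val_four, Matrix.head_fin_const] <;>
            first
              | exact iff_of_false (H.irrefl) (by decide)
              | exact iff_of_true ‹_› (by decide)
              | exact iff_of_false ‹_› (by decide)
      · -- inductive step
        have hn3 : 3 ≤ n := by omega
        have hv1c : ¬H.Adj v1 c := by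
          intro h'
          rw [← dist_eq_one_iff_adj] at h'
          omega
        have hv1d : ¬H.Adj v1 d := by
          intro h'
          have ht := hconn.dist_triangle (u := a) (v := v1) (w := d)
          have hav1 : H.dist a v1 ≤ 1 := by simpa using dist_le h.toWalk
          have : H.dist v1 d = 1 := dist_eq_one_iff_adj.mpr h'
          omega
        have hv1dne : v1 ≠ d := by rintro rfl; exact had h
        have hdv1d : n - 1 ≤ H.dist v1 d := by
          have ht := hconn.dist_triangle (u := a) (v := v1) (w := d)
          have hav1 : H.dist a v1 ≤ 1 := by simpa using dist_le h.toWalk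
          omega
        exact ih (n-1) (by omega) v1 a c d h.symm hcd hv1c hv1d hac had hacne hadne hdv1c
          (by omega) (by omega) (by omega)


end Aux

lemma p5_to_2k2 {V : Type*} {H : SimpleGraph V} (h : ContainsInduced H path5) :
    ContainsInduced H twoK2 := by
  obtain ⟨f, hf⟩ := h
  refine ⟨(⟨![0, 1, 3, 4], by decide⟩ : Fin 4 ↪ Fin 5).trans f, ?_⟩
  intro u v
  rw [Function.Embedding.trans_apply, Function.Embedding.trans_apply, hf]
  revert u v
  decide

theorem stmt_0 {V : Type*} (H : SimpleGraph V) (X Y : Set V)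
    (hpart : ∀ v, v ∈ X ∨ v ∈ Y) (hdisj : X ∩ Y = ∅)
    (hXstable : ∀ u ∈ X, ∀ v ∈ X, ¬H.Adj u v)
    (hYstable : ∀ u ∈ Y, ∀ v ∈ Y, ¬H.Adj u v)
    (hconn : H.Connected) :
    ¬ContainsInduced H path5 ↔ ¬ContainsInduced H twoK2 := by
  constructor
  · intro hp5 h2k2
    obtain ⟨f, hf⟩ := h2k2
    set a := f 0 with ha
    set b := f 1 with hb
    set c := f 2 with hc
    set d := f 3 with hd
    have hab : H.Adj a b := (hf 0 1).mpr (by decide)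
    have hcd : H.Adj c d := (hf 2 3).mpr (by decide)
    have hac : ¬H.Adj a c := fun h' => by have := (hf 0 2).mp h'; revert this; decide
    have had : ¬H.Adj a d := fun h' => by have := (hf 0 3).mp h'; revert this; decide
    have hbc : ¬H.Adj b c := fun h' => by have := (hf 1 2).mp h'; revert this; decide
    have hbd : ¬H.Adj b d := fun h' => by have := (hf 1 3).mp h'; revert this; decide
    have hacne : a ≠ c := fun h' => by have := f.injective h'; revert this; decide
    have hadne : a ≠ d := fun h' => by have := f.injective h'; revert this; decide
    have hbcne : b ≠ c := fun h' => by have := f.injective h'; revert this; decide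
    have hbdne : b ≠ d := fun h' => by have := f.injective h'; revert this; decide
    have hca : ¬H.Adj c a := fun h' => hac h'.symm
    have hda : ¬H.Adj d a := fun h' => had h'.symm
    have hcb : ¬H.Adj c b := fun h' => hbc h'.symm
    have hdb : ¬H.Adj d b := fun h' => hbd h'.symm
    have hcases : (H.dist a c ≤ H.dist a d ∧ H.dist a c ≤ H.dist b c ∧ H.dist a c ≤ H.dist b d) ∨
        (H.dist a d ≤ H.dist a c ∧ H.dist a d ≤ H.dist b d ∧ H.dist a d ≤ H.dist b c) ∨
        (H.dist b c ≤ H.dist b d ∧ H.dist b c ≤ H.dist a c ∧ H.dist b c ≤ H.dist a d) ∨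
        (H.dist b d ≤ H.dist b c ∧ H.dist b d ≤ H.dist a c ∧ H.dist b d ≤ H.dist a d) := by
      omega
    rcases hcases with ⟨u1, u2, u3⟩ | ⟨u1, u2, u3⟩ | ⟨u1, u2, u3⟩ | ⟨u1, u2, u3⟩
    · exact hp5 (key hpart hXstable hYstable hconn a b c d hab hcd hac had hbc hbd
        hbcne hbdne u1 u2 u3)
    · exact hp5 (key hpart hXstable hYstable hconn a b d c hab hcd.symm had hac hbd hbc
        hbdne hbcne u1 u2 u3)
    · exact hp5 (key hpart hXstable hYstable hconn b a c d hab.symm hcd hbc hbd hac had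
        hacne hadne u1 u2 u3)
    · exact hp5 (key hpart hXstable hYstable hconn b a d c hab.symm hcd.symm hbd hbc had hac
        hadne hacne u1 u3 u2)
  · intro h2 hp5
    exact h2 (p5_to_2k2 hp5)
end

section
/- Let G be a graph containing an induced 5-cycle C. If G contains no induced wheel on at most 6 vertices and the complement of G contains no induced wheel on at most 6 vertices, then G is itself the 5-cycle (i.e., V(G) = V(C)). -/
open SimpleGraph

theorem stmt_6 {V : Type*} (G : SimpleGraph V) (f : Fin 5 ↪ V)
    (hC : ∀ i j, G.Adj (f i) (f j) ↔ (cycG 5).Adj i j)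
    (h1 : ¬ContainsWheelLE G 6) (h2 : ¬ContainsWheelLE Gᶜ 6) :
    ∀ v : V, ∃ i, v = f i := by
  classical
  intro v
  by_contra hcon
  push_neg at hcon
  set S : Set (Fin 5) := {i : Fin 5 | G.Adj v (f i)} with hSdef
  by_cases hS : 3 ≤ S.ncard
  · exact h1 ⟨5, by norm_num, by norm_num, f, v, hcon, hC, hS⟩
  · have hScompl : 3 ≤ Sᶜ.ncard := by
      have := Set.ncard_add_ncard_compl S
      simp only [Set.ncard_univ, Nat.card_eq_fintype_card, Fintype.card_fin] at this
      omega
    -- the complement cycle: g i = f (2*i)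
    let σ : Fin 5 ≃ Fin 5 :=
      ⟨fun i => 2*i, fun i => 3*i, by decide, by decide⟩
    let g : Fin 5 ↪ V := (σ.toEmbedding).trans f
    have hcyc : ∀ i j : Fin 5,
        ((2*i : Fin 5) ≠ 2*j ∧ ¬ (cycG 5).Adj (2*i) (2*j)) ↔ (cycG 5).Adj i j := by
      simp only [cycG, SimpleGraph.fromRel_adj]
      decide
    have hgadj : ∀ i j, Gᶜ.Adj (g i) (g j) ↔ (cycG 5).Adj i j := by
      intro i j
      rw [SimpleGraph.compl_adj]
      show f (2*i) ≠ f (2*j) ∧ ¬ G.Adj (f (2*i)) (f (2*j)) ↔ _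
      rw [hC, f.injective.ne_iff]
      exact hcyc i j
    have hhub : 3 ≤ {i : Fin 5 | Gᶜ.Adj v (g i)}.ncard := by
      have hset : {i : Fin 5 | Gᶜ.Adj v (g i)} = σ.symm '' Sᶜ := by
        ext i
        simp only [Set.mem_setOf_eq, SimpleGraph.compl_adj]
        constructor
        · rintro ⟨-, h⟩
          exact ⟨σ i, h, by simp⟩
        · rintro ⟨j, hj, rfl⟩
          refine ⟨hcon _, ?_⟩
          show ¬ G.Adj v (f (σ (σ.symm j)))
          rw [Equiv.apply_symm_apply]
          exact hj
      rw [hset, Set.ncard_image_of_injective _ σ.symm.injective]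
      exact hScompl
    exact h2 ⟨5, by norm_num, by norm_num, g, v, fun i => hcon _, hgadj, hhub⟩
end

section
/- Let G be a graph containing an induced 6-cycle C, and suppose neither G nor its complement contains an induced wheel on at most 7 vertices. Then G is itself the 6-cycle (V(G) = V(C)). -/
open SimpleGraph

def sigma6 : Fin 6 → Fin 4 → Fin 6 := fun r j => r + ![0, 3, 1, 4] j

lemma sigma6_inj : ∀ r : Fin 6, Function.Injective (sigma6 r) := by decide

lemma sigma6_adj : ∀ (r : Fin 6) (j k : Fin 4),
    (sigma6 r j ≠ sigma6 r k ∧ ¬ (cycG 6).Adj (sigma6 r j) (sigma6 r k)) ↔ (cycG 4).Adj j k := by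
  simp only [cycG, SimpleGraph.fromRel_adj]
  decide

lemma key6 : ∀ b : Fin 6 → Bool,
    (∃ i j k : Fin 6, i ≠ j ∧ i ≠ k ∧ j ≠ k ∧ b i ∧ b j ∧ b k) ∨
    (∃ r : Fin 6, ∃ j k l : Fin 4, j ≠ k ∧ j ≠ l ∧ k ≠ l ∧
      !b (sigma6 r j) ∧ !b (sigma6 r k) ∧ !b (sigma6 r l)) := by
  decide

lemma ncard3 {α : Type*} {s : Set α} {i j k : α} (hij : i ≠ j) (hik : i ≠ k) (hjk : j ≠ k)
    (hi : i ∈ s) (hj : j ∈ s) (hk : k ∈ s) (hs : s.Finite) : 3 ≤ s.ncard := by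
  have h : ({i, j, k} : Set α) ⊆ s := by
    intro x hx; rcases hx with rfl | rfl | rfl <;> assumption
  have h3 : ({i, j, k} : Set α).ncard = 3 := by
    rw [Set.ncard_insert_of_notMem (by simp [hij, hik]) (Set.toFinite _), Set.ncard_pair hjk]
  calc 3 = ({i, j, k} : Set α).ncard := h3.symm
    _ ≤ s.ncard := Set.ncard_le_ncard h hs

theorem stmt_8 {V : Type*} (G : SimpleGraph V) (f : Fin 6 ↪ V)
    (hC : ∀ i j, G.Adj (f i) (f j) ↔ (cycG 6).Adj i j)
    (h1 : ¬ContainsWheelLE G 7) (h2 : ¬ContainsWheelLE Gᶜ 7) :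
    ∀ v : V, ∃ i, v = f i := by

  classical
  intro v
  by_contra hv'
  push_neg at hv'
  rcases key6 (fun i => decide (G.Adj v (f i))) with
      ⟨i, j, k, hij, hik, hjk, hi, hj, hk⟩ | ⟨r, j, k, l, hjk, hjl, hkl, hj, hk, hl⟩
  · simp only [decide_eq_true_eq] at hi hj hk
    have hfin : ({i : Fin 6 | G.Adj v (f i)}).Finite := Set.toFinite _
    exact h1 ⟨6, by norm_num, by norm_num, f, v, hv', hC,
      ncard3 hij hik hjk hi hj hk hfin⟩
  · simp only [Bool.not_eq_true', decide_eq_false_iff_not] at hj hk hl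
    refine h2 ⟨4, by norm_num, by norm_num,
      ⟨fun m => f (sigma6 r m), f.injective.comp (sigma6_inj r)⟩, v, ?_, ?_, ?_⟩
    · intro m; exact hv' (sigma6 r m)
    · intro a c
      have hs := sigma6_adj r a c
      rw [SimpleGraph.compl_adj]
      constructor
      · rintro ⟨hne, hna⟩
        exact hs.1 ⟨fun h => hne (congrArg f h), fun h => hna ((hC _ _).2 h)⟩
      · intro h
        obtain ⟨hne, hna⟩ := hs.2 h
        exact ⟨fun he => hne (f.injective he), fun ha => hna ((hC _ _).1 ha)⟩
    · have mem : ∀ m : Fin 4, ¬ G.Adj v (f (sigma6 r m)) →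
          m ∈ {i : Fin 4 | Gᶜ.Adj v (f (sigma6 r i))} := fun m hm => ⟨hv' _, hm⟩
      exact ncard3 hjk hjl hkl (mem j hj) (mem k hk) (mem l hl) (Set.toFinite _)
end

section
/- Every graph in class A contains exactly one hole, and that hole has four vertices; moreover, every vertex outside that hole has at most two neighbors on it, so G contains no wheel. -/
open SimpleGraph

/-- Class A (see Maffray, "Graphs with no induced wheel or antiwheel"). -/
def InClassA {V : Type*} (G : SimpleGraph V) : Prop :=
  ∃ (a b c d e : V) (X : Set V),
    X.Nonempty ∧
    (∀ v : V, v = a ∨ v = b ∨ v = c ∨ v = d ∨ v = e ∨ v ∈ X) ∧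
    a ∉ X ∧ b ∉ X ∧ c ∉ X ∧ d ∉ X ∧ e ∉ X ∧
    a ≠ b ∧ a ≠ c ∧ a ≠ d ∧ a ≠ e ∧ b ≠ c ∧ b ≠ d ∧ b ≠ e ∧ c ≠ d ∧ c ≠ e ∧ d ≠ e ∧
    G.Adj a b ∧ G.Adj b c ∧ G.Adj c d ∧ G.Adj d a ∧ ¬G.Adj a c ∧ ¬G.Adj b d ∧
    G.IsClique X ∧
    (∀ u ∈ X, G.Adj u c ∧ G.Adj u d ∧ ¬G.Adj u a ∧ ¬G.Adj u b) ∧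
    (∀ u ∈ X, G.Adj e u) ∧ ¬G.Adj e a ∧ ¬G.Adj e b ∧ ¬(G.Adj e c ∧ G.Adj e d)

/-- Class B. -/
def InClassB {V : Type*} (G : SimpleGraph V) : Prop :=
  ∃ (X Y Z W : Set V) (x y : V),
    (∀ v : V, v ∈ X ∨ v ∈ Y ∨ v ∈ Z ∨ v ∈ W) ∧
    X ∩ Y = ∅ ∧ X ∩ Z = ∅ ∧ X ∩ W = ∅ ∧ Y ∩ Z = ∅ ∧ Y ∩ W = ∅ ∧ Z ∩ W = ∅ ∧
    (∀ u ∈ X, ∀ v ∈ X, ¬G.Adj u v) ∧ (∀ u ∈ Y, ∀ v ∈ Y, ¬G.Adj u v) ∧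
    (∀ u ∈ Z, ∀ v ∈ Z, ¬G.Adj u v) ∧ (∀ u ∈ W, ∀ v ∈ W, ¬G.Adj u v) ∧
    x ∈ X ∧ y ∈ Y ∧
    (∃ x' ∈ X, x' ≠ x) ∧ (∃ y' ∈ Y, y' ≠ y) ∧
    (G.induce (X ∪ Y)).Connected ∧
    (¬∃ f : Fin 5 ↪ V, (∀ i, f i ∈ X ∪ Y) ∧
      ∀ i j, G.Adj (f i) (f j) ↔ path5.Adj i j) ∧
    (∀ w ∈ W, ∀ v ∈ X ∪ Y ∪ Z, ¬G.Adj w v) ∧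
    (∀ v ∈ Y, G.Adj x v) ∧ (∀ v ∈ X, G.Adj y v) ∧
    (∀ z ∈ Z, G.Adj z x ∧ G.Adj z y ∧ ∀ v ∈ X ∪ Y, v ≠ x → v ≠ y → ¬G.Adj z v)

/-- Class C. -/
def InClassC {V : Type*} (G : SimpleGraph V) : Prop :=
  ∃ (X Y : Set V) (x1 x2 y1 y2 : V),
    (∀ v : V, v ∈ X ∨ v ∈ Y) ∧ X ∩ Y = ∅ ∧
    G.IsClique X ∧ G.IsClique Y ∧
    x1 ∈ X ∧ x2 ∈ X ∧ y1 ∈ Y ∧ y2 ∈ Y ∧ x1 ≠ x2 ∧ y1 ≠ y2 ∧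
    (∀ u ∈ X, ∀ v ∈ Y, (G.Adj u v ↔ (u = x1 ∧ v = y1) ∨ (u = x2 ∧ v = y2)))

/-!
In a class A graph the only neighbours of `a` are `b` and `d`, and those of `b` are `a` and `c`.
A hole through `a` therefore runs `d, a, b, c` and, `cd` being an edge, closes up into the
4-cycle `abcd`. A hole avoiding `a` avoids `b` as well, so it lies in `{e} ∪ K` with
`K = {c, d} ∪ X` a clique; this is impossible, since a hole has two disjoint non-adjacent pairs
and `e` can meet only one of them. Every vertex off `abcd` is `e` or in `X`, hence sees at most
`c` and `d`.
-/

open Fin.CommRing in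
lemma Fin.le_of_nsmul_eq_zero {n m : ℕ} [NeZero n] {ε : Fin n} (hε : ε = 1 ∨ ε = -1)
    (hm : 0 < m) (h : m • ε = 0) : n ≤ m := by
  refine Nat.le_of_dvd hm (Fin.natCast_eq_zero.1 ?_)
  rcases hε with rfl | rfl <;> simpa [nsmul_one, smul_neg] using h

lemma cycG_adj_iff {n : ℕ} [NeZero n] (hn : 2 ≤ n) {ε : Fin n} (hε : ε = 1 ∨ ε = -1)
    (i j : Fin n) : (cycG n).Adj i j ↔ j = i + ε ∨ j = i - ε := by
  have hsucc : ∀ a b : Fin n, ((a : ℕ) + 1) % n = b ↔ b = a + 1 := fun a b => by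
    rw [eq_comm, Fin.ext_iff, Fin.val_add, Fin.val_one', Nat.add_mod_mod]
  have hpred : i = j + 1 ↔ j = i - 1 := by rw [eq_sub_iff_add_eq, eq_comm]
  have hne : ∀ a : Fin n, a + 1 ≠ a := fun a h => by
    rw [add_eq_left, Fin.one_eq_zero_iff] at h
    omega
  have key : (cycG n).Adj i j ↔ j = i + 1 ∨ j = i - 1 := by
    simp only [cycG, fromRel_adj, hsucc, hpred]
    refine ⟨And.right, ?_⟩
    rintro (rfl | rfl)
    · exact ⟨(hne i).symm, Or.inl rfl⟩
    · exact ⟨fun h => hne (i - 1) ((sub_add_cancel i 1).trans h), Or.inr rfl⟩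
  rcases hε with rfl | rfl
  · exact key
  · rw [key, sub_neg_eq_add, ← sub_eq_add_neg, or_comm]

lemma cycG_not_adj_add_two {n : ℕ} (hn : 4 ≤ n) (i : ℕ) (hi : i + 2 < n) :
    ¬(cycG n).Adj ⟨i, by omega⟩ ⟨i + 2, hi⟩ := by
  simp only [cycG, fromRel_adj, ne_eq, Fin.mk.injEq, not_and, not_or]
  refine fun _ => ⟨by rw [Nat.mod_eq_of_lt (by omega)]; omega, ?_⟩
  rcases Nat.lt_or_ge (i + 2 + 1) n with h | h
  · rw [Nat.mod_eq_of_lt h]; omega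
  · rw [show i + 2 + 1 = n by omega, Nat.mod_self]; omega

lemma fin_four_eq_of_eq_one_or_neg_one {ε : Fin 4} (hε : ε = 1 ∨ ε = -1) (k i : Fin 4) :
    i = k ∨ i = k + ε ∨ i = k + ε + ε ∨ i = k - ε := by
  revert ε k i; decide

section Hole

variable {V : Type*} {G : SimpleGraph V} {s : Set V}

open Fin.CommRing in
lemma IsHoleSet.mem_of_forall_adj {v x y : V} (hs : IsHoleSet G s) (hv : v ∈ s)
    (hN : ∀ w, G.Adj v w → w = x ∨ w = y) : x ∈ s ∧ y ∈ s := by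
  obtain ⟨n, hn, f, rfl, hf⟩ := hs
  have : NeZero n := ⟨by omega⟩
  obtain ⟨k, rfl⟩ := hv
  have hadj := fun j => (hf k j).trans (cycG_adj_iff (by omega) (Or.inl rfl) k j)
  have hne : f (k + 1) ≠ f (k - 1) := fun h =>
    absurd (Fin.le_of_nsmul_eq_zero (m := 2) (Or.inl rfl) two_pos
      (by linear_combination f.injective h)) (by omega)
  rcases hN _ ((hadj _).2 (Or.inl rfl)) with h₁ | h₁ <;>
    rcases hN _ ((hadj _).2 (Or.inr rfl)) with h₂ | h₂
  · exact absurd (h₁.trans h₂.symm) hne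
  · exact ⟨h₁ ▸ ⟨_, rfl⟩, h₂ ▸ ⟨_, rfl⟩⟩
  · exact ⟨h₂ ▸ ⟨_, rfl⟩, h₁ ▸ ⟨_, rfl⟩⟩
  · exact absurd (h₁.trans h₂.symm) hne

open Fin.CommRing in
lemma IsHoleSet.eq_of_mem {a b c d : V} (hs : IsHoleSet G s) (ha : a ∈ s) (hab : G.Adj a b)
    (hNa : ∀ v, G.Adj a v → v = b ∨ v = d) (hNb : ∀ v, G.Adj b v → v = a ∨ v = c)
    (hcd : G.Adj c d) : s = {a, b, c, d} := by
  have hbs := (hs.mem_of_forall_adj ha hNa).1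
  obtain ⟨n, hn, f, rfl, hf⟩ := hs
  have : NeZero n := ⟨by omega⟩
  have hadj : ∀ {ε : Fin n}, ε = 1 ∨ ε = -1 → ∀ i j, G.Adj (f i) (f j) ↔ j = i + ε ∨ j = i - ε :=
    fun hε i j => (hf i j).trans (cycG_adj_iff (by omega) hε i j)
  have hsep : ∀ {ε : Fin n}, ε = 1 ∨ ε = -1 → ∀ i, f (i + ε) ≠ f (i - ε) := fun hε i h =>
    absurd (Fin.le_of_nsmul_eq_zero hε two_pos (by linear_combination f.injective h)) (by omega)
  obtain ⟨k, rfl⟩ := ha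
  obtain ⟨ε, hε, rfl⟩ : ∃ ε : Fin n, (ε = 1 ∨ ε = -1) ∧ f (k + ε) = b := by
    obtain ⟨j, rfl⟩ := hbs
    rcases (hadj (Or.inl rfl) k j).1 hab with rfl | rfl
    · exact ⟨1, Or.inl rfl, rfl⟩
    · exact ⟨-1, Or.inr rfl, by rw [sub_eq_add_neg]⟩
  have hd : f (k - ε) = d :=
    (hNa _ ((hadj hε k _).2 (Or.inr rfl))).resolve_left (hsep hε k).symm
  have hc : f (k + ε + ε) = c := by
    refine (hNb _ ((hadj hε _ _).2 (Or.inl rfl))).resolve_left fun h => ?_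
    exact hsep hε (k + ε) (by rw [h, add_sub_cancel_right])
  -- the edge `cd` joins positions `k + 2ε` and `k - ε` of the hole, so `4ε = 0`
  obtain rfl : n = 4 := by
    rcases (hadj hε _ _).1 (show G.Adj (f (k + ε + ε)) (f (k - ε)) by rwa [hc, hd]) with h | h
    · exact le_antisymm (Fin.le_of_nsmul_eq_zero hε four_pos (by linear_combination -h)) hn
    · exact absurd (by rw [h, add_sub_cancel_right]) (hsep hε k)
  ext v
  simp only [Set.mem_range, Set.mem_insert_iff, Set.mem_singleton_iff, ← hc, ← hd]
  constructor
  · rintro ⟨i, rfl⟩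
    rcases fin_four_eq_of_eq_one_or_neg_one hε k i with rfl | rfl | rfl | rfl <;> simp
  · rintro (rfl | rfl | rfl | rfl) <;> exact ⟨_, rfl⟩

lemma IsHoleSet.not_subset_insert {e : V} {K : Set V} (hs : IsHoleSet G s) (hK : G.IsClique K) :
    ¬s ⊆ insert e K := by
  intro hsub
  obtain ⟨n, hn, f, rfl, hf⟩ := hs
  have hpair : ∀ i (hi : i + 2 < n), f ⟨i, by omega⟩ = e ∨ f ⟨i + 2, hi⟩ = e := by
    intro i hi
    by_contra! h
    have hK' : ∀ j, f j ≠ e → f j ∈ K := fun j hj => (hsub ⟨j, rfl⟩).resolve_left hj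
    refine cycG_not_adj_add_two hn i hi ((hf _ _).1 (hK (hK' _ h.1) (hK' _ h.2) ?_))
    exact fun h' => by simpa using f.injective h'
  have hinj : ∀ i j (hi : i < n) (hj : j < n), f ⟨i, hi⟩ = f ⟨j, hj⟩ → i = j :=
    fun i j hi hj h => by simpa using f.injective h
  rcases hpair 0 (by omega) with h₁ | h₁ <;> rcases hpair 1 (by omega) with h₂ | h₂ <;>
    exact absurd (hinj _ _ _ _ (h₁.trans h₂.symm)) (by omega)

lemma isHoleSet_of_fourCycle {a b c d : V} (hac : a ≠ c) (hbd : b ≠ d)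
    (hab : G.Adj a b) (hbc : G.Adj b c) (hcd : G.Adj c d) (hda : G.Adj d a)
    (hnac : ¬G.Adj a c) (hnbd : ¬G.Adj b d) : IsHoleSet G {a, b, c, d} := by
  have hinj : Function.Injective ![a, b, c, d] := by
    intro i j hij
    fin_cases i <;> fin_cases j <;> simp_all [G.ne_of_adj, (G.ne_of_adj _).symm]
  refine ⟨4, le_rfl, ⟨![a, b, c, d], hinj⟩, ?_, ?_⟩
  · ext
    simp [Matrix.range_cons]
    tauto
  · intro i j
    fin_cases i <;> fin_cases j <;> simp_all [cycG, G.adj_comm]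

lemma ContainsWheel.exists_isHoleSet (hG : ContainsWheel G) :
    ∃ s, IsHoleSet G s ∧ ∃ v ∉ s, 2 < {u ∈ s | G.Adj v u}.ncard := by
  obtain ⟨n, hn, f, v, hv, hf, h3⟩ := hG
  refine ⟨Set.range f, ⟨n, hn, f, rfl, hf⟩, v, fun ⟨i, hi⟩ => hv i hi.symm, ?_⟩
  have himg : {u ∈ Set.range f | G.Adj v u} = f '' {i | G.Adj v (f i)} := by
    ext u
    constructor
    · rintro ⟨⟨i, rfl⟩, h⟩
      exact ⟨i, h, rfl⟩
    · rintro ⟨i, h, rfl⟩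
      exact ⟨⟨i, rfl⟩, h⟩
  rw [himg, Set.ncard_image_of_injective _ f.injective]
  omega

end Hole

lemma InClassA.exists_isHoleSet_iff {V : Type*} {G : SimpleGraph V} (hG : InClassA G) :
    ∃ s₀ : Set V, (∀ s, IsHoleSet G s ↔ s = s₀) ∧ s₀.ncard = 4 ∧
      ∀ v ∉ s₀, {u ∈ s₀ | G.Adj v u}.ncard ≤ 2 := by
  obtain ⟨a, b, c, d, e, X, -, hall, -, -, -, -, -, hab, hac, had, -, hbc, hbd, -, hcd, -, -,
    Aab, Abc, Acd, Ada, Nac, Nbd, hX, hXadj, -, Nea, Neb, -⟩ := hG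
  have hfar : ∀ v ∉ ({a, b, c, d} : Set V), ¬G.Adj v a ∧ ¬G.Adj v b := fun v hv => by
    rcases hall v with rfl | rfl | rfl | rfl | rfl | hvX
    iterate 4 simp at hv
    exacts [⟨Nea, Neb⟩, (hXadj v hvX).2.2]
  have hNa : ∀ v, G.Adj a v → v = b ∨ v = d := fun v hv => by
    by_cases hv' : v ∈ ({a, b, c, d} : Set V)
    · simp only [Set.mem_insert_iff, Set.mem_singleton_iff] at hv'
      rcases hv' with rfl | rfl | rfl | rfl
      exacts [absurd hv (G.irrefl), Or.inl rfl, absurd hv Nac, Or.inr rfl]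
    · exact absurd hv.symm (hfar v hv').1
  have hNb : ∀ v, G.Adj b v → v = a ∨ v = c := fun v hv => by
    by_cases hv' : v ∈ ({a, b, c, d} : Set V)
    · simp only [Set.mem_insert_iff, Set.mem_singleton_iff] at hv'
      rcases hv' with rfl | rfl | rfl | rfl
      exacts [Or.inl rfl, absurd hv (G.irrefl), Or.inr rfl, absurd hv Nbd]
    · exact absurd hv.symm (hfar v hv').2
  have hK : G.IsClique (insert c (insert d X)) := by
    simp only [isClique_insert, Set.mem_insert_iff]
    refine ⟨⟨hX, fun u hu _ => (hXadj u hu).2.1.symm⟩, ?_⟩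
    rintro u (rfl | hu) _
    exacts [Acd, (hXadj u hu).1.symm]
  refine ⟨{a, b, c, d}, fun s => ⟨fun hs => ?_, ?_⟩, ?_, fun v hv => ?_⟩
  · by_cases ha : a ∈ s
    · exact hs.eq_of_mem ha Aab hNa hNb Acd
    have hb : b ∉ s := fun hb => ha (hs.mem_of_forall_adj hb hNb).1
    refine absurd (fun v hv => ?_) (hs.not_subset_insert (e := e) hK)
    rcases hall v with rfl | rfl | rfl | rfl | rfl | hvX <;> simp_all
  · rintro rfl
    exact isHoleSet_of_fourCycle hac hbd Aab Abc Acd Ada Nac Nbd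
  · simp [Set.ncard_insert_of_notMem, *]
  · have hsub : {u ∈ ({a, b, c, d} : Set V) | G.Adj v u} ⊆ {c, d} := by
      rintro u ⟨hu, hvu⟩
      simp only [Set.mem_insert_iff, Set.mem_singleton_iff] at hu ⊢
      rcases hu with rfl | rfl | hu
      exacts [absurd hvu (hfar v hv).1, absurd hvu (hfar v hv).2, hu]
    exact (Set.ncard_le_ncard hsub (Set.toFinite _)).trans (Set.ncard_pair hcd).le

theorem stmt_10 {V : Type*} (G : SimpleGraph V) (hG : InClassA G) :
    (∃! s : Set V, IsHoleSet G s) ∧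
    (∀ s : Set V, IsHoleSet G s →
      s.ncard = 4 ∧ ∀ v ∉ s, ({u ∈ s | G.Adj v u}).ncard ≤ 2) ∧
    ¬ContainsWheel G := by
  obtain ⟨s₀, hholes, hcard, hbound⟩ := hG.exists_isHoleSet_iff
  refine ⟨⟨s₀, (hholes s₀).2 rfl, fun s hs => (hholes s).1 hs⟩, fun s hs => ?_, fun hW => ?_⟩
  · obtain rfl := (hholes s).1 hs
    exact ⟨hcard, hbound⟩
  · obtain ⟨s, hs, v, hv, hv3⟩ := hW.exists_isHoleSet
    obtain rfl := (hholes s).1 hs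
    exact absurd (hbound v hv) (by omega)
end

section
/- Let G be a graph such that neither G nor its complement contains an induced wheel on at most 5 vertices. Let A and B be disjoint cliques of G, each of size at least 2, with no edges between A and B, chosen with |A ∪ B| maximum. Then every vertex x outside A ∪ B satisfies one of: (i) x is complete to A and has a neighbor in B, (ii) x is complete to B and has a neighbor in A, or (iii) x has exactly one non-neighbor in A and exactly one non-neighbor in B. -/
open SimpleGraph

/-!
In `Gᶜ` the cliques `A` and `B` become stable sets complete to each other, so any two vertices
of `A` together with any two of `B` induce a four-cycle. If `x ∉ A ∪ B` had two non-neighbours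
in `A` and a non-neighbour in `B`, it would be the hub of a wheel on such a four-cycle in `Gᶜ`;
so a vertex with two non-neighbours on one side is complete to the other side. A vertex complete
to `B` has a neighbour in `A`, since otherwise `A` and `insert x B` would contradict the
maximality of `|A ∪ B|`.
-/

namespace SimpleGraph

variable {V : Type*}

theorem containsWheelLE_five_of_fourCycle {H : SimpleGraph V} {c₀ c₁ c₂ c₃ w : V}
    (h₀₁ : H.Adj c₀ c₁) (h₁₂ : H.Adj c₁ c₂) (h₂₃ : H.Adj c₂ c₃) (h₃₀ : H.Adj c₃ c₀)
    (h₀₂ : c₀ ≠ c₂) (h₁₃ : c₁ ≠ c₃) (n₀₂ : ¬H.Adj c₀ c₂) (n₁₃ : ¬H.Adj c₁ c₃)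
    (hw₀ : H.Adj w c₀) (hw₁ : H.Adj w c₁) (hw₂ : H.Adj w c₂) (hw₃ : w ≠ c₃) :
    ContainsWheelLE H 5 := by
  have hinj : Function.Injective ![c₀, c₁, c₂, c₃] := by
    have := h₀₁.ne; have := h₁₂.ne; have := h₂₃.ne; have := h₃₀.ne
    intro i j hij
    fin_cases i <;> fin_cases j <;> simp_all [eq_comm]
  refine ⟨4, le_rfl, le_rfl, ⟨_, hinj⟩, w, ?_, ?_, ?_⟩
  · intro i
    fin_cases i <;> simp [hw₀.ne, hw₁.ne, hw₂.ne, hw₃]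
  · intro i j
    fin_cases i <;> fin_cases j <;>
      simp [cycG, h₀₁, h₁₂, h₂₃, h₃₀, h₀₁.symm, h₁₂.symm, h₂₃.symm, h₃₀.symm, n₀₂, n₁₃,
        mt H.adj_symm n₀₂, mt H.adj_symm n₁₃]
  · calc 3 = ({0, 1, 2} : Set (Fin 4)).ncard :=
          (Set.ncard_eq_three.2 ⟨0, 1, 2, by decide, by decide, by decide, rfl⟩).symm
      _ ≤ _ := Set.ncard_le_ncard (by intro i hi; rcases hi with rfl | rfl | rfl <;> simpa)

variable {G : SimpleGraph V} {A B : Set V}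

theorem compl_isCompleteBetween (hdisj : A ∩ B = ∅) (hanti : ∀ u ∈ A, ∀ v ∈ B, ¬G.Adj u v) :
    Gᶜ.IsCompleteBetween A B := fun u hu v hv =>
  (G.compl_adj u v).2 ⟨fun huv => hdisj.subset ⟨hu, huv ▸ hv⟩, hanti u hu v hv⟩

theorem forall_adj_of_two_not_adj (hwheel : ¬ContainsWheelLE Gᶜ 5) (hA : G.IsClique A)
    (hB : G.IsClique B) (hB2 : 2 ≤ B.ncard) (hAB : Gᶜ.IsCompleteBetween A B) {x : V}
    (hxA : x ∉ A) (hxB : x ∉ B) {a₁ a₂ : V} (ha₁ : a₁ ∈ A) (ha₂ : a₂ ∈ A) (ha : a₁ ≠ a₂)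
    (hxa₁ : ¬G.Adj x a₁) (hxa₂ : ¬G.Adj x a₂) : ∀ b ∈ B, G.Adj x b := by
  by_contra! ⟨b₁, hb₁, hxb₁⟩
  obtain ⟨b₂, hb₂, hb⟩ := B.exists_ne_of_one_lt_ncard hB2 b₁
  have compl_adj_of_notMem {s : Set V} {y : V} (hy : y ∈ s) (hxs : x ∉ s) (hxy : ¬G.Adj x y) :
      Gᶜ.Adj x y := (G.compl_adj x y).2 ⟨(ne_of_mem_of_not_mem hy hxs).symm, hxy⟩
  exact hwheel <| containsWheelLE_five_of_fourCycle (hAB ha₁ hb₁) (hAB ha₂ hb₁).symm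
    (hAB ha₂ hb₂) (hAB ha₁ hb₂).symm ha hb.symm (fun h => h.2 (hA ha₁ ha₂ ha))
    (fun h => h.2 (hB hb₁ hb₂ hb.symm)) (compl_adj_of_notMem ha₁ hxA hxa₁)
    (compl_adj_of_notMem hb₁ hxB hxb₁) (compl_adj_of_notMem ha₂ hxA hxa₂)
    (ne_of_mem_of_not_mem hb₂ hxB).symm

theorem exists_adj_of_forall_adj (hA : G.IsClique A) (hB : G.IsClique B) (hA2 : 2 ≤ A.ncard)
    (hB2 : 2 ≤ B.ncard) (hAB : Gᶜ.IsCompleteBetween A B)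
    (hmax : ∀ A' B' : Set V, G.IsClique A' → G.IsClique B' →
      2 ≤ A'.ncard → 2 ≤ B'.ncard → A' ∩ B' = ∅ →
      (∀ u ∈ A', ∀ v ∈ B', ¬G.Adj u v) → (A' ∪ B').ncard ≤ (A ∪ B).ncard)
    {x : V} (hxA : x ∉ A) (hxB : x ∉ B) (hx : ∀ b ∈ B, G.Adj x b) : ∃ a ∈ A, G.Adj x a := by
  by_contra! hxA'
  have hfinB : B.Finite := Set.finite_of_ncard_pos (by omega)
  have hfin : (A ∪ B).Finite := (Set.finite_of_ncard_pos (by omega)).union hfinB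
  have hle := hmax A (insert x B) hA (hB.insert fun b hb _ => hx b hb) hA2
    (hB2.trans (Set.ncard_le_ncard (Set.subset_insert x B) (hfinB.insert x)))
    (Set.disjoint_iff_inter_eq_empty.1 (Set.disjoint_insert_right.2 ⟨hxA, hAB.disjoint⟩))
    (by
      rintro u hu v (rfl | hv)
      · exact fun h => hxA' u hu h.symm
      · exact ((G.compl_adj u v).1 (hAB hu hv)).2)
  rw [Set.union_insert, Set.ncard_insert_of_notMem (by simp [hxA, hxB]) hfin] at hle
  omega

end SimpleGraph

theorem stmt_13_general {V : Type*} (G : SimpleGraph V)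
    (h2 : ¬ContainsWheelLE Gᶜ 5)
    (A B : Set V) (hA : G.IsClique A) (hB : G.IsClique B)
    (hA2 : 2 ≤ A.ncard) (hB2 : 2 ≤ B.ncard) (hdisj : A ∩ B = ∅)
    (hanti : ∀ u ∈ A, ∀ v ∈ B, ¬G.Adj u v)
    (hmax : ∀ A' B' : Set V, G.IsClique A' → G.IsClique B' →
      2 ≤ A'.ncard → 2 ≤ B'.ncard → A' ∩ B' = ∅ →
      (∀ u ∈ A', ∀ v ∈ B', ¬G.Adj u v) → (A' ∪ B').ncard ≤ (A ∪ B).ncard) :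
    ∀ x, x ∉ A ∪ B →
      ((∀ a ∈ A, G.Adj x a) ∧ (∃ b ∈ B, G.Adj x b)) ∨
      ((∀ b ∈ B, G.Adj x b) ∧ (∃ a ∈ A, G.Adj x a)) ∨
      ((∃! a, a ∈ A ∧ ¬G.Adj x a) ∧ (∃! b, b ∈ B ∧ ¬G.Adj x b)) := by
  intro x hx
  obtain ⟨hxA, hxB⟩ := not_or.1 hx
  have hAB := compl_isCompleteBetween hdisj hanti
  by_cases hcA : ∀ a ∈ A, G.Adj x a
  · exact Or.inl ⟨hcA, exists_adj_of_forall_adj hB hA hB2 hA2 hAB.symm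
      (Set.union_comm A B ▸ hmax) hxB hxA hcA⟩
  by_cases hcB : ∀ b ∈ B, G.Adj x b
  · exact Or.inr (Or.inl ⟨hcB, exists_adj_of_forall_adj hA hB hA2 hB2 hAB hmax hxA hxB hcB⟩)
  push Not at hcA hcB
  obtain ⟨a, ha, hxa⟩ := hcA
  obtain ⟨b, hb, hxb⟩ := hcB
  refine Or.inr (Or.inr ⟨⟨a, ⟨ha, hxa⟩, fun a' ⟨ha', hxa'⟩ => ?_⟩,
    ⟨b, ⟨hb, hxb⟩, fun b' ⟨hb', hxb'⟩ => ?_⟩⟩)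
  · by_contra hne
    exact hxb (forall_adj_of_two_not_adj h2 hA hB hB2 hAB hxA hxB ha' ha hne hxa' hxa b hb)
  · by_contra hne
    exact hxa (forall_adj_of_two_not_adj h2 hB hA hA2 hAB.symm hxB hxA hb' hb hne hxb' hxb a ha)

theorem stmt_13 {V : Type*} [Fintype V] (G : SimpleGraph V)
    (h1 : ¬ContainsWheelLE G 5) (h2 : ¬ContainsWheelLE Gᶜ 5)
    (A B : Set V) (hA : G.IsClique A) (hB : G.IsClique B)
    (hA2 : 2 ≤ A.ncard) (hB2 : 2 ≤ B.ncard) (hdisj : A ∩ B = ∅)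
    (hanti : ∀ u ∈ A, ∀ v ∈ B, ¬G.Adj u v)
    (hmax : ∀ A' B' : Set V, G.IsClique A' → G.IsClique B' →
      2 ≤ A'.ncard → 2 ≤ B'.ncard → A' ∩ B' = ∅ →
      (∀ u ∈ A', ∀ v ∈ B', ¬G.Adj u v) → (A' ∪ B').ncard ≤ (A ∪ B).ncard) :
    ∀ x, x ∉ A ∪ B →
      ((∀ a ∈ A, G.Adj x a) ∧ (∃ b ∈ B, G.Adj x b)) ∨
      ((∀ b ∈ B, G.Adj x b) ∧ (∃ a ∈ A, G.Adj x a)) ∨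
      ((∃! a, a ∈ A ∧ ¬G.Adj x a) ∧ (∃! b, b ∈ B ∧ ¬G.Adj x b)) :=
  stmt_13_general G h2 A B hA hB hA2 hB2 hdisj hanti hmax
end

section
/- A graph G contains no induced wheel and no induced antiwheel if and only if G contains no induced wheel on at most seven vertices and no induced antiwheel on at most seven vertices. -/
open SimpleGraph

/-!
A wheel with more than seven vertices has a hole `v₀ v₁ ⋯ v_{n-1}` with `n ≥ 7` as its rim.
In the complement, `v₀ v₃ v₁ v₄` is then an induced four-cycle and `v₅` is adjacent to `v₀`, `v₃`
and `v₁`, which gives an antiwheel on five vertices.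
-/

lemma cycG_adj_iff_of_succ_lt {n : ℕ} {a b : Fin n} (ha : (a : ℕ) + 1 < n)
    (hb : (b : ℕ) + 1 < n) : (cycG n).Adj a b ↔ (a : ℕ) + 1 = b ∨ (b : ℕ) + 1 = a := by
  simp only [cycG, fromRel_adj, Nat.mod_eq_of_lt ha, Nat.mod_eq_of_lt hb, ne_eq, Fin.ext_iff]
  omega

section

variable {V : Type*} {G : SimpleGraph V}

lemma ContainsWheelLE.containsWheel {k : ℕ} (h : ContainsWheelLE G k) : ContainsWheel G := by
  obtain ⟨n, hn, -, f, hub, hhub, hadj, hcard⟩ := h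
  exact ⟨n, hn, f, hub, hhub, hadj, hcard⟩

lemma ContainsWheelLE.mono {k m : ℕ} (h : ContainsWheelLE G k) (hkm : k ≤ m) :
    ContainsWheelLE G m := by
  obtain ⟨n, hn, hnk, rest⟩ := h
  exact ⟨n, hn, hnk.trans hkm, rest⟩

lemma containsWheelLE_five_of_square {a b c d h : V}
    (hab : G.Adj a b) (hbc : G.Adj b c) (hcd : G.Adj c d) (hda : G.Adj d a)
    (hac : ¬G.Adj a c) (hbd : ¬G.Adj b d) (hac' : a ≠ c) (hbd' : b ≠ d)
    (hha : G.Adj h a) (hhb : G.Adj h b) (hhc : G.Adj h c) (hhd : h ≠ d) :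
    ContainsWheelLE G 5 := by
  have hinj : Function.Injective ![a, b, c, d] := by
    have := hab.ne
    have := hbc.ne
    have := hcd.ne
    have := hda.ne
    intro i j hij
    fin_cases i <;> fin_cases j <;>
      first | rfl | exact absurd hij ‹_› | exact absurd hij.symm ‹_›
  refine ⟨4, le_rfl, by norm_num, ⟨_, hinj⟩, h, ?_, ?_, ?_⟩
  · intro i
    fin_cases i <;> simp [hha.ne, hhb.ne, hhc.ne, hhd]
  · intro i j
    fin_cases i <;> fin_cases j <;>
      simp [cycG, hab, hbc, hcd, hda, hab.symm, hbc.symm, hcd.symm, hda.symm, hac, hbd,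
        mt G.adj_symm hac, mt G.adj_symm hbd]
  · have hsub : ({0, 1, 2} : Set (Fin 4)) ⊆ {i | G.Adj h (![a, b, c, d] i)} := by
      rintro i (rfl | rfl | rfl) <;> simpa
    calc 3 = ({0, 1, 2} : Set (Fin 4)).ncard :=
          (Set.ncard_eq_three.2 ⟨0, 1, 2, by decide, by decide, by decide, rfl⟩).symm
      _ ≤ _ := Set.ncard_le_ncard hsub (Set.toFinite _)

lemma containsWheelLE_compl_of_long_hole {n : ℕ} (hn : 7 ≤ n) (f : Fin n ↪ V)
    (hf : ∀ i j, G.Adj (f i) (f j) ↔ (cycG n).Adj i j) : ContainsWheelLE Gᶜ 5 := by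
  have h6 : 6 ≤ n := by omega
  let v : Fin 6 → V := fun k => f (Fin.castLE h6 k)
  have hv_ne (k l : Fin 6) : v k ≠ v l ↔ k ≠ l := by
    simp only [v, f.injective.ne_iff, ne_eq, Fin.ext_iff, Fin.val_castLE]
  have hv_adj (k l : Fin 6) :
      Gᶜ.Adj (v k) (v l) ↔ k ≠ l ∧ (k : ℕ) + 1 ≠ l ∧ (l : ℕ) + 1 ≠ k := by
    have hk : (Fin.castLE h6 k : ℕ) + 1 < n := by simp only [Fin.val_castLE]; omega
    have hl : (Fin.castLE h6 l : ℕ) + 1 < n := by simp only [Fin.val_castLE]; omega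
    rw [compl_adj, hf, cycG_adj_iff_of_succ_lt hk hl, hv_ne]
    simp only [Fin.val_castLE]
    omega
  refine containsWheelLE_five_of_square (a := v 0) (b := v 3) (c := v 1) (d := v 4) (h := v 5)
    ?_ ?_ ?_ ?_ ?_ ?_ ?_ ?_ ?_ ?_ ?_ ?_ <;> simp [hv_adj, hv_ne]

lemma ContainsWheel.containsWheelLE_or_compl (h : ContainsWheel G) :
    ContainsWheelLE G 7 ∨ ContainsWheelLE Gᶜ 7 := by
  obtain ⟨n, hn, f, hub, hhub, hadj, hcard⟩ := h
  by_cases hn7 : n + 1 ≤ 7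
  · exact Or.inl ⟨n, hn, hn7, f, hub, hhub, hadj, hcard⟩
  · exact Or.inr ((containsWheelLE_compl_of_long_hole (by omega) f hadj).mono (by norm_num))

end

theorem stmt_14_general {V : Type*} (G : SimpleGraph V) :
    (¬ContainsWheel G ∧ ¬ContainsWheel Gᶜ) ↔
      (¬ContainsWheelLE G 7 ∧ ¬ContainsWheelLE Gᶜ 7) := by
  refine ⟨fun ⟨h, hc⟩ => ⟨mt ContainsWheelLE.containsWheel h,
    mt ContainsWheelLE.containsWheel hc⟩, fun ⟨h, hc⟩ => ⟨fun hw => ?_, fun hw => ?_⟩⟩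
  · exact hw.containsWheelLE_or_compl.elim h hc
  · exact hw.containsWheelLE_or_compl.elim hc fun h' => h (compl_compl G ▸ h')

theorem stmt_14 {V : Type*} [Fintype V] (G : SimpleGraph V) :
    (¬ContainsWheel G ∧ ¬ContainsWheel Gᶜ) ↔
      (¬ContainsWheelLE G 7 ∧ ¬ContainsWheelLE Gᶜ 7) :=
  stmt_14_general G
end
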